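/- arXiv:2605.17747 — 2 statements merged into one kernel-verified Lean document; each statement's English description precedes it below -/
import Mathlib

section
/- Let (N, ∘_λ) be a commutative associative conformal superalgebra and let D be an even derivation of (N, ∘_λ). Define [a_λ b] := a ∘_λ D(b) − (−1)^{|a||b|} b ∘_{−∂−λ} D(a) for homogeneous a, b ∈ N. Then (N, ∘_λ, [·_λ ·]) is a transposed Poisson conformal superalgebra. -/
open Polynomial
open scoped TensorProduct

noncomputable section

namespace TPCSAFormal

/-- The super-sign `(-1)^{i·j}` for parities `i, j ∈ ℤ/2ℤ`. -/
def sgn (i j : ZMod 2) : ℂ := (-1 : ℂ) ^ (i.val * j.val)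

variable (L : Type*) [AddCommGroup L] [Module ℂ L]
  [Module (Polynomial ℂ) L] [IsScalarTower ℂ (Polynomial ℂ) L]

/-- A conformal `λ`-product on the `ℂ[∂]`-module `L`, recorded by its family of `n`-th
product coefficients: `a ∘_λ b = ∑_n λ^n • coeff n a b`, with finitely many nonzero terms.
This is exactly the data of a `ℂ`-bilinear map `L ⊗ L → ℂ[λ] ⊗ L`. -/
structure ConformalProduct where
  coeff : ℕ → L →ₗ[ℂ] L →ₗ[ℂ] L
  coeff_finite : ∀ a b : L, ∃ N : ℕ, ∀ n : ℕ, N ≤ n → coeff n a b = 0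

variable {L}

/-- The value `a ∘_λ b` of the `λ`-product at `λ ∈ ℂ`.  Since `ℂ` is infinite, identities
between such values for all `λ` are equivalent to the corresponding polynomial identities. -/
def ConformalProduct.mul (m : ConformalProduct L) (lam : ℂ) (a b : L) : L :=
  ∑ᶠ n : ℕ, lam ^ n • m.coeff n a b

/-- The value `a ∘_{-∂-λ} b`, where `∂` acts on `L` as scalar multiplication by
`X ∈ ℂ[∂]` (the variable `λ` being replaced by the operator `-∂-λ`). -/
def ConformalProduct.cmul (m : ConformalProduct L) (lam : ℂ) (a b : L) : L :=
  ∑ᶠ n : ℕ, ((-((X : Polynomial ℂ) + C lam)) ^ n) • m.coeff n a b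

variable (L) in
/-- A `ℤ₂`-grading on `L` making it a `ℤ₂`-graded `ℂ[∂]`-module: `L = L₀ ⊕ L₁` with
`∂ L_i ⊆ L_i`, where `∂` acts as multiplication by `X ∈ ℂ[∂]`. -/
structure SuperModule where
  grade : ZMod 2 → Submodule ℂ L
  isInternal : DirectSum.IsInternal grade
  X_smul_mem : ∀ (i : ZMod 2) (a : L), a ∈ grade i → (X : Polynomial ℂ) • a ∈ grade i

/-- `m` is an even `λ`-product on the `ℤ₂`-graded `ℂ[∂]`-module `(L, S)`:
it is even with respect to the grading and conformally sesquilinear. -/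
structure IsLambdaProduct (S : SuperModule L) (m : ConformalProduct L) : Prop where
  even : ∀ (i j : ZMod 2) (a b : L), a ∈ S.grade i → b ∈ S.grade j →
    ∀ n : ℕ, m.coeff n a b ∈ S.grade (i + j)
  sesq_left : ∀ (lam : ℂ) (a b : L),
    m.mul lam ((X : Polynomial ℂ) • a) b = (-lam) • m.mul lam a b
  sesq_right : ∀ (lam : ℂ) (a b : L),
    m.mul lam a ((X : Polynomial ℂ) • b) =
      (X : Polynomial ℂ) • m.mul lam a b + lam • m.mul lam a b

/-- `(L, S, m)` is a commutative associative conformal superalgebra. -/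
structure IsCommAssoc (S : SuperModule L) (m : ConformalProduct L)
    extends IsLambdaProduct S m : Prop where
  comm : ∀ (i j : ZMod 2) (a b : L), a ∈ S.grade i → b ∈ S.grade j →
    ∀ lam : ℂ, m.mul lam a b = sgn i j • m.cmul lam b a
  assoc : ∀ (lam mu : ℂ) (a b c : L),
    m.mul lam a (m.mul mu b c) = m.mul (lam + mu) (m.mul lam a b) c

/-- `(L, S, br)` is a Lie conformal superalgebra. -/
structure IsLie (S : SuperModule L) (br : ConformalProduct L)
    extends IsLambdaProduct S br : Prop where
  skew : ∀ (i j : ZMod 2) (a b : L), a ∈ S.grade i → b ∈ S.grade j →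
    ∀ lam : ℂ, br.mul lam a b = -(sgn i j • br.cmul lam b a)
  jacobi : ∀ (i j : ZMod 2) (a b : L), a ∈ S.grade i → b ∈ S.grade j →
    ∀ (c : L) (lam mu : ℂ),
      br.mul lam a (br.mul mu b c) =
        br.mul (lam + mu) (br.mul lam a b) c + sgn i j • br.mul mu b (br.mul lam a c)

/-- `(L, S, m, br)` is a transposed Poisson conformal superalgebra. -/
structure IsTPCSA (S : SuperModule L) (m br : ConformalProduct L) : Prop where
  commAssoc : IsCommAssoc S m
  lie : IsLie S br
  transposedLeibniz : ∀ (i j : ZMod 2) (a b : L), a ∈ S.grade i → b ∈ S.grade j →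
    ∀ (c : L) (lam mu : ℂ),
      (2 : ℂ) • m.mul lam a (br.mul mu b c) =
        br.mul (lam + mu) (m.mul lam a b) c + sgn i j • br.mul mu b (m.mul lam a c)

/-- `(L, S, m, br)` is a Poisson conformal superalgebra. -/
structure IsPCSA (S : SuperModule L) (m br : ConformalProduct L) : Prop where
  commAssoc : IsCommAssoc S m
  lie : IsLie S br
  leibniz : ∀ (i j : ZMod 2) (a b : L), a ∈ S.grade i → b ∈ S.grade j →
    ∀ (c : L) (lam mu : ℂ),
      br.mul lam a (m.mul mu b c) =
        m.mul (lam + mu) (br.mul lam a b) c + sgn i j • m.mul mu b (br.mul lam a c)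

/-- `(L, S, br, α)` is a Hom-Lie conformal superalgebra. -/
structure IsHomLie (S : SuperModule L) (br : ConformalProduct L) (α : L → L)
    extends IsLambdaProduct S br : Prop where
  map_smul_add : ∀ (c : ℂ) (a b : L), α (c • a + b) = c • α a + α b
  map_grade : ∀ (i : ZMod 2) (a : L), a ∈ S.grade i → α a ∈ S.grade i
  commute_partial : ∀ a : L, α ((X : Polynomial ℂ) • a) = (X : Polynomial ℂ) • α a
  skew : ∀ (i j : ZMod 2) (a b : L), a ∈ S.grade i → b ∈ S.grade j →
    ∀ lam : ℂ, br.mul lam a b = -(sgn i j • br.cmul lam b a)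
  homJacobi : ∀ (i j : ZMod 2) (a b : L), a ∈ S.grade i → b ∈ S.grade j →
    ∀ (c : L) (lam mu : ℂ),
      br.mul lam (α a) (br.mul mu b c) =
        br.mul (lam + mu) (br.mul lam a b) (α c) + sgn i j • br.mul mu (α b) (br.mul lam a c)

/-- `(L, S, p)` is a left-symmetric conformal superalgebra. -/
structure IsLeftSymmetric (S : SuperModule L) (p : ConformalProduct L)
    extends IsLambdaProduct S p : Prop where
  leftSym : ∀ (i j : ZMod 2) (a b : L), a ∈ S.grade i → b ∈ S.grade j →
    ∀ (c : L) (lam mu : ℂ),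
      p.mul (lam + mu) (p.mul lam a b) c - p.mul lam a (p.mul mu b c) =
        sgn i j • (p.mul (lam + mu) (p.mul mu b a) c - p.mul mu b (p.mul lam a c))

/-- `(L, S, p)` is a (left) Novikov conformal superalgebra. -/
structure IsNovikov (S : SuperModule L) (p : ConformalProduct L)
    extends IsLeftSymmetric S p : Prop where
  novikov : ∀ (j k : ZMod 2) (b c : L), b ∈ S.grade j → c ∈ S.grade k →
    ∀ (a : L) (lam mu : ℂ),
      p.mul (lam + mu) (p.mul lam a b) c = sgn j k • p.cmul mu (p.mul lam a c) b

/-- `(L, S, mc, p)` is a Novikov-Poisson conformal superalgebra. -/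
structure IsNovikovPoisson (S : SuperModule L) (mc p : ConformalProduct L) : Prop where
  commAssoc : IsCommAssoc S mc
  novikov : IsNovikov S p
  compat₁ : ∀ (lam mu : ℂ) (a b c : L),
    p.mul (lam + mu) (mc.mul lam a b) c = mc.mul lam a (p.mul mu b c)
  compat₂ : ∀ (i j : ZMod 2) (a b : L), a ∈ S.grade i → b ∈ S.grade j →
    ∀ (c : L) (lam mu : ℂ),
      mc.mul (lam + mu) (p.mul lam a b) c - p.mul lam a (mc.mul mu b c) =
        sgn i j • (mc.mul (lam + mu) (p.mul mu b a) c - p.mul mu b (mc.mul lam a c))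

/-- `(L, S, mc, p)` is a pre-Lie commutative conformal superalgebra. -/
structure IsPreLieComm (S : SuperModule L) (mc p : ConformalProduct L) : Prop where
  commAssoc : IsCommAssoc S mc
  leftSymmetric : IsLeftSymmetric S p
  compat : ∀ (i j : ZMod 2) (a b : L), a ∈ S.grade i → b ∈ S.grade j →
    ∀ (c : L) (lam mu : ℂ),
      p.mul lam a (mc.mul mu b c) =
        mc.mul (lam + mu) (p.mul lam a b) c + sgn i j • mc.mul mu b (p.mul lam a c)

/-- `(L, S, mc, p)` is a pre-Lie Poisson conformal superalgebra. -/
structure IsPreLiePoisson (S : SuperModule L) (mc p : ConformalProduct L) : Prop where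
  commAssoc : IsCommAssoc S mc
  leftSymmetric : IsLeftSymmetric S p
  compat₁ : ∀ (lam mu : ℂ) (a b c : L),
    p.mul (lam + mu) (mc.mul lam a b) c = mc.mul lam a (p.mul mu b c)
  compat₂ : ∀ (i j : ZMod 2) (a b : L), a ∈ S.grade i → b ∈ S.grade j →
    ∀ (c : L) (lam mu : ℂ),
      mc.mul (lam + mu) (p.mul lam a b) c - p.mul lam a (mc.mul mu b c) =
        sgn i j • (mc.mul (lam + mu) (p.mul mu b a) c - p.mul mu b (mc.mul lam a c))

/-!
By supercommutativity the bracket is `[a_λ b] = a ∘_λ D(b) - D(a) ∘_λ b`. The key identity is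
super left commutativity `a ∘_λ (b ∘_μ c) = (-1)^{|a||b|} b ∘_μ (a ∘_λ c)`: associativity and
supercommutativity turn the left side into `(b ∘_{-∂-λ} a) ∘_{λ+μ} c`, and since `∂` acts on the
left factor of a product at `λ+μ` as `-(λ+μ)`, this is `(b ∘_μ a) ∘_{λ+μ} c`. Skew-symmetry of the
bracket is supercommutativity; for the Jacobi identity and the transposed Leibniz rule, expand with
the Leibniz rule for `D`, reassociate every term into the form `(u ∘ v) ∘ w`, and the remaining
terms cancel after moving factors with super left commutativity.
-/

lemma sgn_mul_sgn_swap (i j : ZMod 2) : sgn i j * sgn j i = 1 := by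
  rw [sgn, sgn, Nat.mul_comm j.val, ← mul_pow]
  norm_num

lemma sgn_smul_sgn_swap_smul {M : Type*} [AddCommGroup M] [Module ℂ M] (i j : ZMod 2) (x : M) :
    sgn i j • sgn j i • x = x := by
  rw [smul_smul, sgn_mul_sgn_swap, one_smul]

namespace ConformalProduct

variable (m : ConformalProduct L)

omit [Module ℂ[X] L] [IsScalarTower ℂ ℂ[X] L]

lemma hasFiniteSupport_smul_coeff {R : Type*} [Semiring R] [Module R L] (g : ℕ → R)
    (a b : L) : Function.HasFiniteSupport fun n => g n • m.coeff n a b := by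
  obtain ⟨N, hN⟩ := m.coeff_finite a b
  refine (Set.finite_Iio N).subset fun n hn => ?_
  by_contra hNn
  exact hn (by simp only [hN n (not_lt.mp hNn), smul_zero])

def mulₗ (lam : ℂ) : L →ₗ[ℂ] L →ₗ[ℂ] L :=
  LinearMap.mk₂ ℂ (m.mul lam)
    (fun a a' b => by
      simp only [mul, map_add, LinearMap.add_apply, smul_add]
      exact finsum_add_distrib (m.hasFiniteSupport_smul_coeff _ _ _)
        (m.hasFiniteSupport_smul_coeff _ _ _))
    (fun c a b => by
      simp only [mul, map_smul, LinearMap.smul_apply, smul_comm _ c]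
      exact (smul_finsum' c (m.hasFiniteSupport_smul_coeff _ _ _)).symm)
    (fun a b b' => by
      simp only [mul, map_add, smul_add]
      exact finsum_add_distrib (m.hasFiniteSupport_smul_coeff _ _ _)
        (m.hasFiniteSupport_smul_coeff _ _ _))
    (fun c a b => by
      simp only [mul, map_smul, smul_comm _ c]
      exact (smul_finsum' c (m.hasFiniteSupport_smul_coeff _ _ _)).symm)

@[simp]
lemma mulₗ_apply (lam : ℂ) (a b : L) : m.mulₗ lam a b = m.mul lam a b := rfl

lemma mul_add_left (lam : ℂ) (a a' b : L) :
    m.mul lam (a + a') b = m.mul lam a b + m.mul lam a' b :=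
  (m.mulₗ lam).map_add₂ a a' b

lemma mul_sub_left (lam : ℂ) (a a' b : L) :
    m.mul lam (a - a') b = m.mul lam a b - m.mul lam a' b :=
  (m.mulₗ lam).map_sub₂ a a' b

lemma mul_smul_left (lam c : ℂ) (a b : L) : m.mul lam (c • a) b = c • m.mul lam a b :=
  (m.mulₗ lam).map_smul₂ c a b

lemma mul_add_right (lam : ℂ) (a b b' : L) :
    m.mul lam a (b + b') = m.mul lam a b + m.mul lam a b' :=
  (m.mulₗ lam a).map_add b b'

lemma mul_sub_right (lam : ℂ) (a b b' : L) :
    m.mul lam a (b - b') = m.mul lam a b - m.mul lam a b' :=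
  (m.mulₗ lam a).map_sub b b'

end ConformalProduct

open ConformalProduct

section LambdaProduct

variable {S : SuperModule L} {m : ConformalProduct L}

lemma IsLambdaProduct.mul_polynomial_smul_left (hm : IsLambdaProduct S m) (lam : ℂ)
    (p : Polynomial ℂ) (a b : L) : m.mul lam (p • a) b = p.eval (-lam) • m.mul lam a b := by
  induction p using Polynomial.induction_on with
  | C c => rw [← algebraMap_eq, algebraMap_smul, mul_smul_left, algebraMap_eq, eval_C]
  | add p q hp hq => rw [add_smul, mul_add_left, hp, hq, eval_add, add_smul]
  | monomial n c ih =>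
    rw [pow_succ', mul_left_comm, mul_smul, hm.sesq_left, ih, smul_smul]
    simp only [eval_mul, eval_X]

lemma IsLambdaProduct.mul_cmul_left (hm : IsLambdaProduct S m) (lam nu : ℂ) (a b c : L) :
    m.mul nu (m.cmul lam a b) c = m.mul nu (m.mul (nu - lam) a b) c := by
  let mulRight : L →ₗ[ℂ] L := (m.mulₗ nu).flip c
  change mulRight (m.cmul lam a b) = mulRight (m.mul (nu - lam) a b)
  rw [cmul, mul, map_finsum mulRight (m.hasFiniteSupport_smul_coeff _ _ _),
    map_finsum mulRight (m.hasFiniteSupport_smul_coeff _ _ _)]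
  congr 1 with n
  simp only [mulRight, LinearMap.flip_apply, mulₗ_apply, mul_smul_left,
    hm.mul_polynomial_smul_left, eval_pow, eval_neg, eval_add, eval_X, eval_C]
  ring_nf

end LambdaProduct

lemma IsCommAssoc.mul_left_comm {S : SuperModule L} {m : ConformalProduct L}
    (hm : IsCommAssoc S m) {i j : ZMod 2} {a b : L} (ha : a ∈ S.grade i) (hb : b ∈ S.grade j)
    (c : L) (lam mu : ℂ) :
    m.mul lam a (m.mul mu b c) = sgn i j • m.mul mu b (m.mul lam a c) := by
  rw [hm.assoc, hm.comm i j a b ha hb, mul_smul_left, hm.mul_cmul_left, add_sub_cancel_left,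
    add_comm, ← hm.assoc]

section DerivBracket

variable (m : ConformalProduct L) (D : L →ₗ[Polynomial ℂ] L)

/-- The bracket `[a_λ b] = a ∘_λ D(b) - D(a) ∘_λ b`; by supercommutativity its second term is
`(-1)^{|a||b|} b ∘_{-∂-λ} D(a)` on homogeneous elements. -/
def derivBracket : ConformalProduct L where
  coeff n := (m.coeff n).compl₂ (D.restrictScalars ℂ) - m.coeff n ∘ₗ D.restrictScalars ℂ
  coeff_finite a b := by
    obtain ⟨N₁, h₁⟩ := m.coeff_finite a (D b)
    obtain ⟨N₂, h₂⟩ := m.coeff_finite (D a) b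
    refine ⟨max N₁ N₂, fun n hn => ?_⟩
    simp [h₁ n (le_of_max_le_left hn), h₂ n (le_of_max_le_right hn)]

lemma derivBracket_coeff (n : ℕ) (a b : L) :
    (derivBracket m D).coeff n a b = m.coeff n a (D b) - m.coeff n (D a) b := rfl

lemma derivBracket_mul (lam : ℂ) (a b : L) :
    (derivBracket m D).mul lam a b = m.mul lam a (D b) - m.mul lam (D a) b := by
  simp only [mul, derivBracket_coeff, smul_sub]
  exact finsum_sub_distrib (m.hasFiniteSupport_smul_coeff _ _ _)
    (m.hasFiniteSupport_smul_coeff _ _ _)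

lemma derivBracket_cmul (lam : ℂ) (a b : L) :
    (derivBracket m D).cmul lam a b = m.cmul lam a (D b) - m.cmul lam (D a) b := by
  simp only [cmul, derivBracket_coeff, smul_sub]
  exact finsum_sub_distrib (m.hasFiniteSupport_smul_coeff _ _ _)
    (m.hasFiniteSupport_smul_coeff _ _ _)

variable {m D} {S : SuperModule L}

lemma IsLambdaProduct.derivBracket (hm : IsLambdaProduct S m)
    (hD_grade : ∀ (i : ZMod 2) (a : L), a ∈ S.grade i → D a ∈ S.grade i) :
    IsLambdaProduct S (derivBracket m D) where
  even i j a b ha hb n := by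
    rw [derivBracket_coeff]
    exact sub_mem (hm.even i j a (D b) ha (hD_grade j b hb) n)
      (hm.even i j (D a) b (hD_grade i a ha) hb n)
  sesq_left lam a b := by
    rw [derivBracket_mul, derivBracket_mul, D.map_smul, hm.sesq_left, hm.sesq_left, smul_sub]
  sesq_right lam a b := by
    rw [derivBracket_mul, derivBracket_mul, D.map_smul, hm.sesq_right, hm.sesq_right,
      smul_sub, smul_sub]
    abel

variable (hm : IsCommAssoc S m)
  (hD_grade : ∀ (i : ZMod 2) (a : L), a ∈ S.grade i → D a ∈ S.grade i)
  (hD_der : ∀ (lam : ℂ) (a b : L),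
    D (m.mul lam a b) = m.mul lam (D a) b + m.mul lam a (D b))
include hm hD_grade

lemma derivBracket_skew {i j : ZMod 2} {a b : L} (ha : a ∈ S.grade i) (hb : b ∈ S.grade j)
    (lam : ℂ) : (derivBracket m D).mul lam a b = -(sgn i j • (derivBracket m D).cmul lam b a) := by
  rw [derivBracket_mul, derivBracket_cmul, hm.comm i j a (D b) ha (hD_grade j b hb),
    hm.comm i j (D a) b (hD_grade i a ha) hb, smul_sub, neg_sub]

include hD_der

lemma derivBracket_jacobi {i j : ZMod 2} {a b : L} (ha : a ∈ S.grade i) (hb : b ∈ S.grade j)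
    (c : L) (lam mu : ℂ) :
    (derivBracket m D).mul lam a ((derivBracket m D).mul mu b c) =
      (derivBracket m D).mul (lam + mu) ((derivBracket m D).mul lam a b) c
        + sgn i j • (derivBracket m D).mul mu b ((derivBracket m D).mul lam a c) := by
  have hDa := hD_grade i a ha
  have hDDa := hD_grade i _ hDa
  have hDb := hD_grade j b hb
  simp only [derivBracket_mul, hD_der, mul_sub_right, mul_add_right, mul_sub_left, mul_add_left,
    ← hm.assoc]
  rw [hm.mul_left_comm hb hDa (D c), hm.mul_left_comm hb ha, hm.mul_left_comm hb hDDa,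
    hm.mul_left_comm hDb ha, hm.mul_left_comm hDb hDa]
  simp only [smul_sub, smul_add, sgn_smul_sgn_swap_smul]
  abel

lemma derivBracket_transposedLeibniz {i j : ZMod 2} {a b : L} (ha : a ∈ S.grade i)
    (hb : b ∈ S.grade j) (c : L) (lam mu : ℂ) :
    (2 : ℂ) • m.mul lam a ((derivBracket m D).mul mu b c) =
      (derivBracket m D).mul (lam + mu) (m.mul lam a b) c
        + sgn i j • (derivBracket m D).mul mu b (m.mul lam a c) := by
  simp only [derivBracket_mul, hD_der, mul_sub_right, mul_add_right, mul_add_left, ← hm.assoc]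
  rw [hm.mul_left_comm hb (hD_grade i a ha) c, hm.mul_left_comm hb ha (D c),
    hm.mul_left_comm (hD_grade j b hb) ha c]
  simp only [smul_sub, smul_add, sgn_smul_sgn_swap_smul, two_smul]
  abel

lemma isTPCSA_derivBracket : IsTPCSA S m (derivBracket m D) where
  commAssoc := hm
  lie :=
    { toIsLambdaProduct := hm.derivBracket hD_grade
      skew := fun _ _ _ _ ha hb => derivBracket_skew hm hD_grade ha hb
      jacobi := fun _ _ _ _ ha hb => derivBracket_jacobi hm hD_grade hD_der ha hb }
  transposedLeibniz _ _ _ _ ha hb := derivBracket_transposedLeibniz hm hD_grade hD_der ha hb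

end DerivBracket

/-- if `D` is an even derivation of a commutative associative conformal
superalgebra `(N, ∘_λ)`, then the bracket
`[a_λ b] = a ∘_λ D(b) - (-1)^{|a||b|} b ∘_{-∂-λ} D(a)` makes `N` a transposed Poisson
conformal superalgebra. -/
theorem statement_13 (S : SuperModule L) (m : ConformalProduct L)
    (hm : IsCommAssoc S m) (D : L →ₗ[Polynomial ℂ] L)
    (hD_grade : ∀ (i : ZMod 2) (a : L), a ∈ S.grade i → D a ∈ S.grade i)
    (hD_der : ∀ (lam : ℂ) (a b : L),
      D (m.mul lam a b) = m.mul lam (D a) b + m.mul lam a (D b)) :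
    ∃ br : ConformalProduct L,
      (∀ (i j : ZMod 2) (a b : L), a ∈ S.grade i → b ∈ S.grade j →
        ∀ lam : ℂ, br.mul lam a b = m.mul lam a (D b) - sgn i j • m.cmul lam b (D a)) ∧
      IsTPCSA S m br :=
  ⟨derivBracket m D, fun i j a b ha hb lam => by
    rw [derivBracket_mul, hm.comm i j (D a) b (hD_grade i a ha) hb lam],
    isTPCSA_derivBracket hm hD_grade hD_der⟩
end TPCSAFormal
end
end

section
/- Let (L, ∘_λ, ∗_λ) be a pre-Lie Poisson conformal superalgebra. Define [a_λ b] := a ∗_λ b − (−1)^{|a||b|} (b ∗_{−∂−λ} a) for homogeneous a, b ∈ L. Then (L, ∘_λ, [·_λ ·]) is a transposed Poisson conformal superalgebra. -/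
open Polynomial
open scoped TensorProduct

noncomputable section

namespace TPCSAFormal

variable (L : Type*) [AddCommGroup L] [Module ℂ L]
  [Module (Polynomial ℂ) L] [IsScalarTower ℂ (Polynomial ℂ) L]

variable {L}

/-!
The bracket is built coefficientwise from `p` and its opposite product `b ∗_{-∂-λ} a`, whose
coefficients come from expanding `(-(∂ + λ))ⁿ` in `ℂ[∂][λ]`.

The λ-products are only known to satisfy their axioms for complex `λ, μ`, but expanding the
Jacobi identity and the transposed Leibniz rule for the bracket produces products evaluated at
operators such as `-∂-λ`. An identity between nested products is an identity of `L`-valued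
polynomials in `(λ, μ)`; since `ℂ` is infinite it then holds after substituting any commuting
operators from `ℂ[∂]`, and sesquilinearity turns nested operator-valued products into exactly
such substitutions. With this, the Jacobi identity is the sum of three instances of left
symmetry, and the transposed Leibniz rule follows from the two compatibility axioms and
supercommutativity along the same lines as for non-conformal pre-Lie Poisson algebras.
-/

section Sign

lemma sgn_zero_left (j : ZMod 2) : sgn 0 j = 1 := by simp [sgn]

lemma sgn_comm (i j : ZMod 2) : sgn i j = sgn j i := by
  rw [sgn, sgn, mul_comm]

lemma sgn_mul_self (i j : ZMod 2) : sgn i j * sgn i j = 1 := by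
  rw [sgn, ← pow_add, ← two_mul, pow_mul, neg_one_sq, one_pow]

lemma sgn_sq (i j : ZMod 2) : sgn i j ^ 2 = 1 := by
  rw [sq, sgn_mul_self]

lemma sgn_add_left (i j k : ZMod 2) : sgn (i + j) k = sgn i k * sgn j k := by
  obtain rfl | rfl : i = 0 ∨ i = 1 := by revert i; decide
  · rw [zero_add, sgn_zero_left, one_mul]
  obtain rfl | rfl : j = 0 ∨ j = 1 := by revert j; decide
  · rw [add_zero, sgn_zero_left, mul_one]
  · rw [show (1 + 1 : ZMod 2) = 0 from rfl, sgn_zero_left, sgn_mul_self]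

lemma sgn_add_right (i j k : ZMod 2) : sgn i (j + k) = sgn i j * sgn i k := by
  rw [sgn_comm, sgn_add_left, sgn_comm j, sgn_comm k]

lemma sgn_smul_eq_iff {M : Type*} [AddCommGroup M] [Module ℂ M] {i j : ZMod 2} {v w : M} :
    sgn i j • v = w ↔ v = sgn i j • w := by
  constructor <;> rintro rfl <;> rw [smul_smul, sgn_mul_self, one_smul]

end Sign

section PolynomialFunction

variable {L : Type*} [AddCommGroup L] [Module ℂ L] [Module ℂ[X] L] [IsScalarTower ℂ ℂ[X] L]
  {σ τ : Type*}

lemma C_smul_eq_smul (c : ℂ) (v : L) : (C c : ℂ[X]) • v = c • v :=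
  algebraMap_smul ℂ[X] c v

/-- Evaluation `P ⊗ v ↦ P(q) • v` of an `L`-valued polynomial at commuting operators `q`. -/
def evalAt (q : σ → ℂ[X]) : MvPolynomial σ ℂ ⊗[ℂ] L →ₗ[ℂ] L :=
  TensorProduct.lift <| LinearMap.mk₂ ℂ (fun P v => MvPolynomial.aeval q P • v)
    (fun _ _ _ => by rw [map_add, add_smul]) (fun _ _ _ => by rw [map_smul, smul_assoc])
    (fun _ _ _ => smul_add ..) (fun _ _ _ => smul_comm ..)

@[simp]
lemma evalAt_tmul (q : σ → ℂ[X]) (P : MvPolynomial σ ℂ) (v : L) :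
    evalAt q (P ⊗ₜ v) = MvPolynomial.aeval q P • v := by
  simp [evalAt]

lemma evalAt_rTensor_mulLeft (q : σ → ℂ[X]) (P : MvPolynomial σ ℂ)
    (T : MvPolynomial σ ℂ ⊗[ℂ] L) :
    evalAt q (LinearMap.rTensor L (LinearMap.mulLeft ℂ P) T) =
      MvPolynomial.aeval q P • evalAt q T := by
  induction T using TensorProduct.induction_on with
  | zero => simp
  | tmul Q v => simp [mul_smul]
  | add T U hT hU => simp only [map_add, hT, hU, smul_add]

lemma evalAt_lTensor_lsmul (q : σ → ℂ[X]) (r : ℂ[X]) (T : MvPolynomial σ ℂ ⊗[ℂ] L) :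
    evalAt q (LinearMap.lTensor _ ((LinearMap.lsmul ℂ[X] L r).restrictScalars ℂ) T) =
      r • evalAt q T := by
  induction T using TensorProduct.induction_on with
  | zero => simp
  | tmul Q v => simp [smul_comm r]
  | add T U hT hU => simp only [map_add, hT, hU, smul_add]

lemma evalAt_rTensor_aeval (q : τ → ℂ[X]) (φ : σ → MvPolynomial τ ℂ)
    (T : MvPolynomial σ ℂ ⊗[ℂ] L) :
    evalAt q (LinearMap.rTensor L (MvPolynomial.aeval φ).toLinearMap T) =
      evalAt (fun i => MvPolynomial.aeval q (φ i)) T := by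
  induction T using TensorProduct.induction_on with
  | zero => simp
  | tmul Q v => simp [MvPolynomial.aeval_bind₁]
  | add T U hT hU => simp only [map_add, hT, hU]

lemma aeval_C_eq_C_eval (x : σ → ℂ) (P : MvPolynomial σ ℂ) :
    MvPolynomial.aeval (fun i => C (x i)) P = C (MvPolynomial.eval x P) :=
  MvPolynomial.aeval_algebraMap_apply ℂ[X] x P

theorem eq_zero_of_forall_evalAt_C {T : MvPolynomial σ ℂ ⊗[ℂ] L}
    (h : ∀ x : σ → ℂ, evalAt (fun i => C (x i)) T = 0) : T = 0 := by
  classical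
  set e := TensorProduct.equivFinsuppOfBasisLeft (N := L) (MvPolynomial.basisMonomials σ ℂ)
  have hT : T = (e T).sum fun d v => MvPolynomial.monomial d 1 ⊗ₜ v := by
    have :=
      TensorProduct.equivFinsuppOfBasisLeft_symm_apply (MvPolynomial.basisMonomials σ ℂ) (e T)
    rwa [LinearEquiv.symm_apply_apply, MvPolynomial.coe_basisMonomials] at this
  suffices e T = 0 by simpa using this
  ext d
  rw [Finsupp.zero_apply, ← Module.forall_dual_apply_eq_zero_iff ℂ]
  intro φ
  -- `φ` applied to the coefficients gives a scalar polynomial vanishing on all of `ℂ^σ`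
  have hP : (e T).sum (fun d v => MvPolynomial.monomial d (φ v)) = 0 := by
    refine MvPolynomial.funext fun x => ?_
    have := congrArg φ (h x)
    rw [hT, map_finsuppSum, map_finsuppSum] at this
    rw [map_finsuppSum]
    simpa [aeval_C_eq_C_eval, C_smul_eq_smul, MvPolynomial.eval_monomial, mul_comm] using this
  have := congrArg (MvPolynomial.coeff d) hP
  by_cases hd : e T d = 0
  · simp [hd]
  · simpa [Finsupp.sum, MvPolynomial.coeff_sum, MvPolynomial.coeff_monomial, hd] using this

def IsPolynomialFun (Φ : (σ → ℂ[X]) → L) : Prop :=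
  ∃ T : MvPolynomial σ ℂ ⊗[ℂ] L, ∀ q, Φ q = evalAt q T

lemma isPolynomialFun_aeval_smul (P : MvPolynomial σ ℂ) (v : L) :
    IsPolynomialFun fun q : σ → ℂ[X] => MvPolynomial.aeval q P • v :=
  ⟨P ⊗ₜ v, fun _ => (evalAt_tmul ..).symm⟩

namespace IsPolynomialFun

variable {Φ Ψ : (σ → ℂ[X]) → L}

lemma add (hΦ : IsPolynomialFun Φ) (hΨ : IsPolynomialFun Ψ) :
    IsPolynomialFun fun q => Φ q + Ψ q := by
  obtain ⟨T, hT⟩ := hΦ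
  obtain ⟨U, hU⟩ := hΨ
  exact ⟨T + U, fun q => by simp only [map_add, hT, hU]⟩

lemma sub (hΦ : IsPolynomialFun Φ) (hΨ : IsPolynomialFun Ψ) :
    IsPolynomialFun fun q => Φ q - Ψ q := by
  obtain ⟨T, hT⟩ := hΦ
  obtain ⟨U, hU⟩ := hΨ
  exact ⟨T - U, fun q => by simp only [map_sub, hT, hU]⟩

lemma smul (c : ℂ) (hΦ : IsPolynomialFun Φ) : IsPolynomialFun fun q => c • Φ q := by
  obtain ⟨T, hT⟩ := hΦ
  exact ⟨c • T, fun q => by simp only [map_smul, hT]⟩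

lemma sum {ι : Type*} (s : Finset ι) {Φ : ι → (σ → ℂ[X]) → L}
    (h : ∀ i ∈ s, IsPolynomialFun (Φ i)) : IsPolynomialFun fun q => ∑ i ∈ s, Φ i q := by
  choose T hT using h
  refine ⟨∑ i ∈ s.attach, T i i.2, fun q => ?_⟩
  dsimp only
  rw [map_sum, ← Finset.sum_attach s]
  exact Finset.sum_congr rfl fun i _ => hT i i.2 q

lemma aeval_smul (P : MvPolynomial σ ℂ) (hΦ : IsPolynomialFun Φ) :
    IsPolynomialFun fun q => MvPolynomial.aeval q P • Φ q := by
  obtain ⟨T, hT⟩ := hΦ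
  exact ⟨_, fun q => by dsimp only; rw [evalAt_rTensor_mulLeft, hT]⟩

lemma const_smul (r : ℂ[X]) (hΦ : IsPolynomialFun Φ) : IsPolynomialFun fun q => r • Φ q := by
  obtain ⟨T, hT⟩ := hΦ
  exact ⟨_, fun q => by dsimp only; rw [evalAt_lTensor_lsmul, hT]⟩

lemma comp_aeval (φ : σ → MvPolynomial τ ℂ) (hΦ : IsPolynomialFun Φ) :
    IsPolynomialFun fun q : τ → ℂ[X] => Φ fun i => MvPolynomial.aeval q (φ i) := by
  obtain ⟨T, hT⟩ := hΦ
  exact ⟨_, fun q => by dsimp only; rw [evalAt_rTensor_aeval, hT]⟩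

lemma comp₂ {Φ : (Fin 2 → ℂ[X]) → L} (hΦ : IsPolynomialFun Φ)
    (P₀ P₁ : MvPolynomial (Fin 2) ℂ) :
    IsPolynomialFun fun q => Φ ![MvPolynomial.aeval q P₀, MvPolynomial.aeval q P₁] := by
  have h (q : Fin 2 → ℂ[X]) : (fun i => MvPolynomial.aeval q (![P₀, P₁] i)) =
      ![MvPolynomial.aeval q P₀, MvPolynomial.aeval q P₁] := by
    ext i; fin_cases i <;> rfl
  simpa only [h] using hΦ.comp_aeval ![P₀, P₁]

theorem ext (hΦ : IsPolynomialFun Φ) (hΨ : IsPolynomialFun Ψ)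
    (h : ∀ x : σ → ℂ, Φ (fun i => C (x i)) = Ψ (fun i => C (x i))) : Φ = Ψ := by
  obtain ⟨T, hT⟩ := hΦ.sub hΨ
  replace hT : ∀ q, Φ q - Ψ q = evalAt q T := hT
  have hT0 : T = 0 := eq_zero_of_forall_evalAt_C fun x => by rw [← hT, h x, sub_self]
  funext q
  rw [← sub_eq_zero, hT q, hT0, map_zero]

end IsPolynomialFun

end PolynomialFunction

namespace SuperModule

variable {L : Type*} [AddCommGroup L] [Module ℂ L] [Module ℂ[X] L] (S : SuperModule L)

lemma induction_on {P : L → Prop} (a : L) (hom : ∀ i, ∀ x ∈ S.grade i, P x)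
    (add : ∀ x y, P x → P y → P (x + y)) : P a :=
  Submodule.iSup_induction (motive := P) S.grade
    (S.isInternal.submodule_iSup_eq_top ▸ Submodule.mem_top) hom (hom 0 0 (zero_mem _)) add

lemma induction_on₂ {P : L → L → Prop} (a b : L)
    (hom : ∀ i j, ∀ x ∈ S.grade i, ∀ y ∈ S.grade j, P x y)
    (add_left : ∀ x x' y, P x y → P x' y → P (x + x') y)
    (add_right : ∀ x y y', P x y → P x y' → P x (y + y')) : P a b :=
  S.induction_on (P := fun x => P x b) a
    (fun i x hx => S.induction_on b (hom i · x hx) (add_right x)) fun x x' => add_left x x' b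

def proj (i : ZMod 2) : L →ₗ[ℂ] L :=
  (S.grade i).subtype ∘ₗ DirectSum.component ℂ (ZMod 2) (fun i => S.grade i) i ∘ₗ
    (LinearEquiv.ofBijective (DirectSum.coeLinearMap S.grade) S.isInternal).symm.toLinearMap

lemma proj_of_mem {i : ZMod 2} {a : L} (ha : a ∈ S.grade i) : S.proj i a = a := by
  change ((LinearEquiv.ofBijective (DirectSum.coeLinearMap S.grade) S.isInternal).symm a i : L) = a
  rw [S.isInternal.ofBijective_coeLinearMap_of_mem ha]

lemma proj_of_mem_of_ne {i j : ZMod 2} {a : L} (ha : a ∈ S.grade j) (h : j ≠ i) :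
    S.proj i a = 0 := by
  change ((LinearEquiv.ofBijective (DirectSum.coeLinearMap S.grade) S.isInternal).symm a i : L) = 0
  rw [S.isInternal.ofBijective_coeLinearMap_of_mem_ne h ha, ZeroMemClass.coe_zero]

lemma smul_mem [IsScalarTower ℂ ℂ[X] L] (r : ℂ[X]) {i : ZMod 2} {a : L}
    (ha : a ∈ S.grade i) : r • a ∈ S.grade i := by
  induction r using Polynomial.induction_on with
  | C c => rw [C_smul_eq_smul]; exact Submodule.smul_mem _ c ha
  | add r r' hr hr' => rw [add_smul]; exact add_mem hr hr'
  | monomial n c ih =>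
    rw [pow_succ, ← mul_assoc, mul_comm _ X, mul_smul]
    exact S.X_smul_mem i _ ih

end SuperModule

namespace ConformalProduct

section Basic

variable {L : Type*} [AddCommGroup L] [Module ℂ L] (m : ConformalProduct L)

lemma hasFiniteSupport_coeff (a b : L) : Function.HasFiniteSupport fun n => m.coeff n a b := by
  obtain ⟨N, hN⟩ := m.coeff_finite a b
  refine (Set.finite_Iio N).subset fun n hn => ?_
  by_contra h
  exact hn (hN n (not_lt.mp h))

def ofHasFiniteSupport (c : ℕ → L →ₗ[ℂ] L →ₗ[ℂ] L)
    (hc : ∀ a b, Function.HasFiniteSupport fun n => c n a b) : ConformalProduct L where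
  coeff := c
  coeff_finite a b := by
    obtain ⟨N, hN⟩ := (hc a b).bddAbove
    exact ⟨N + 1, fun n hn => by_contra fun h => by have := hN h; omega⟩

variable [Module ℂ[X] L] [IsScalarTower ℂ ℂ[X] L]

def lincomb (c : ℕ → ℂ[X]) : L →ₗ[ℂ] L →ₗ[ℂ] L :=
  LinearMap.mk₂ ℂ (fun a b => ∑ᶠ n, c n • m.coeff n a b)
    (fun a a' b => by
      simp only [map_add, LinearMap.add_apply, smul_add]
      exact finsum_add_distrib ((m.hasFiniteSupport_coeff a b).smul_right _)
        ((m.hasFiniteSupport_coeff a' b).smul_right _))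
    (fun c a b => by
      simp only [map_smul, LinearMap.smul_apply, smul_comm _ c]
      exact (smul_finsum' c ((m.hasFiniteSupport_coeff a b).smul_right _)).symm)
    (fun a b b' => by
      simp only [map_add, smul_add]
      exact finsum_add_distrib ((m.hasFiniteSupport_coeff a b).smul_right _)
        ((m.hasFiniteSupport_coeff a b').smul_right _))
    (fun c a b => by
      simp only [map_smul, smul_comm _ c]
      exact (smul_finsum' c ((m.hasFiniteSupport_coeff a b).smul_right _)).symm)

lemma lincomb_apply (c : ℕ → ℂ[X]) (a b : L) :
    m.lincomb c a b = ∑ᶠ n, c n • m.coeff n a b := rfl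

lemma lincomb_eq_sum (c : ℕ → ℂ[X]) {a b : L} {N : ℕ}
    (hN : ∀ n, N ≤ n → m.coeff n a b = 0) :
    m.lincomb c a b = ∑ n ∈ Finset.range N, c n • m.coeff n a b :=
  finsum_eq_sum_of_support_subset _ fun n hn => Finset.mem_range.mpr <|
    by_contra fun h => hn (by simp [hN n (not_lt.mp h)])

/-- `a ∘_q b`: the `λ`-product with an operator `q ∈ ℂ[∂]` in place of `λ`. -/
def opmul (q : ℂ[X]) : L →ₗ[ℂ] L →ₗ[ℂ] L := m.lincomb (q ^ ·)

lemma opmul_apply (q : ℂ[X]) (a b : L) : m.opmul q a b = ∑ᶠ n, q ^ n • m.coeff n a b := rfl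

lemma opmul_eq_sum (q : ℂ[X]) {a b : L} {N : ℕ} (hN : ∀ n, N ≤ n → m.coeff n a b = 0) :
    m.opmul q a b = ∑ n ∈ Finset.range N, q ^ n • m.coeff n a b :=
  m.lincomb_eq_sum _ hN

lemma mul_eq_opmul (lam : ℂ) (a b : L) : m.mul lam a b = m.opmul (C lam) a b := by
  simp only [mul, opmul_apply, ← map_pow, C_smul_eq_smul]

lemma cmul_eq_opmul (lam : ℂ) (a b : L) : m.cmul lam a b = m.opmul (-(X + C lam)) a b := rfl

lemma isPolynomialFun_opmul {σ : Type*} (i : σ) (a b : L) :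
    IsPolynomialFun fun q : σ → ℂ[X] => m.opmul (q i) a b := by
  obtain ⟨N, hN⟩ := m.coeff_finite a b
  simp_rw [m.opmul_eq_sum _ hN]
  refine IsPolynomialFun.sum _ fun n _ => ?_
  simpa using isPolynomialFun_aeval_smul (MvPolynomial.X i ^ n) (m.coeff n a b)

lemma opmul_eq_smul_opmul_of_mul_eq {m' : ConformalProduct L} {a b a' b' : L} {c : ℂ}
    (h : ∀ lam, m.mul lam a b = c • m'.mul lam a' b') (q : ℂ[X]) :
    m.opmul q a b = c • m'.opmul q a' b' :=
  congrFun (IsPolynomialFun.ext (σ := Unit) (m.isPolynomialFun_opmul () a b)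
    ((m'.isPolynomialFun_opmul () a' b').smul c)
    fun x => by simpa only [← mul_eq_opmul] using h (x ())) fun _ => q

end Basic

section Sesquilinear

variable {L : Type*} [AddCommGroup L] [Module ℂ L] [Module ℂ[X] L] [IsScalarTower ℂ ℂ[X] L]
  {S : SuperModule L} {m : ConformalProduct L}

lemma opmul_X_smul_left (hm : IsLambdaProduct S m) (q : ℂ[X]) (a b : L) :
    m.opmul q ((X : ℂ[X]) • a) b = (-q) • m.opmul q a b := by
  have hR := (m.isPolynomialFun_opmul () a b).aeval_smul (-.X () : MvPolynomial Unit ℂ)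
  simp only [map_neg, MvPolynomial.aeval_X] at hR
  have key := IsPolynomialFun.ext (m.isPolynomialFun_opmul () ((X : ℂ[X]) • a) b) hR
    fun x => by simp only [← mul_eq_opmul, hm.sesq_left, C_smul_eq_smul, neg_smul]
  exact congrFun key fun _ => q

lemma opmul_X_smul_right (hm : IsLambdaProduct S m) (q : ℂ[X]) (a b : L) :
    m.opmul q a ((X : ℂ[X]) • b) = (X + q) • m.opmul q a b := by
  have hR := ((m.isPolynomialFun_opmul () a b).const_smul X).add
    ((m.isPolynomialFun_opmul () a b).aeval_smul (.X () : MvPolynomial Unit ℂ))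
  simp only [MvPolynomial.aeval_X] at hR
  have key := IsPolynomialFun.ext (m.isPolynomialFun_opmul () a ((X : ℂ[X]) • b)) hR
    fun x => by simp only [← mul_eq_opmul, hm.sesq_right, C_smul_eq_smul]
  rw [add_smul]
  exact congrFun key fun _ => q

lemma opmul_smul_left (hm : IsLambdaProduct S m) (q r : ℂ[X]) (a b : L) :
    m.opmul q (r • a) b = r.comp (-q) • m.opmul q a b := by
  induction r using Polynomial.induction_on with
  | C c => simp [C_smul_eq_smul]
  | add r r' hr hr' => simp only [add_smul, map_add, LinearMap.add_apply, hr, hr', add_comp]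
  | monomial n c ih =>
    rw [pow_succ, ← mul_assoc, mul_comm _ X, mul_smul, opmul_X_smul_left hm, ih, smul_smul]
    simp only [mul_comp, X_comp]

lemma opmul_smul_right (hm : IsLambdaProduct S m) (q r : ℂ[X]) (a b : L) :
    m.opmul q a (r • b) = r.comp (X + q) • m.opmul q a b := by
  induction r using Polynomial.induction_on with
  | C c => simp [C_smul_eq_smul]
  | add r r' hr hr' => simp only [add_smul, map_add, hr, hr', add_comp]
  | monomial n c ih =>
    rw [pow_succ, ← mul_assoc, mul_comm _ X, mul_smul, opmul_X_smul_right hm, ih, smul_smul]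
    simp only [mul_comp, X_comp]

lemma lincomb_mem (hm : IsLambdaProduct S m) (c : ℕ → ℂ[X]) {i j : ZMod 2} {a b : L}
    (ha : a ∈ S.grade i) (hb : b ∈ S.grade j) : m.lincomb c a b ∈ S.grade (i + j) :=
  finsum_induction (· ∈ S.grade (i + j)) (zero_mem _) (fun _ _ => add_mem)
    fun n => S.smul_mem _ (hm.even i j a b ha hb n)

lemma opmul_mem (hm : IsLambdaProduct S m) (q : ℂ[X]) {i j : ZMod 2} {a b : L}
    (ha : a ∈ S.grade i) (hb : b ∈ S.grade j) : m.opmul q a b ∈ S.grade (i + j) :=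
  lincomb_mem hm _ ha hb

end Sesquilinear

section Opposite

/-- The polynomial `-(∂ + λ) ∈ ℂ[∂][λ]`; the outer variable is `λ`, the inner one `∂`. -/
def oppSubst : ℂ[X][X] := -(X + C X)

lemma natDegree_oppSubst_pow_le (k : ℕ) : (oppSubst ^ k).natDegree ≤ k := by
  simpa using natDegree_pow_le_of_le k
    (by rw [oppSubst, natDegree_neg, natDegree_X_add_C] : oppSubst.natDegree ≤ 1)

lemma eval_oppSubst (q : ℂ[X]) : oppSubst.eval q = -(X + q) := by
  simp [oppSubst, add_comm]

lemma neg_X_add_neg_X_add (q : ℂ[X]) : -(X + -(X + q)) = q := by ring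

variable {L : Type*} [AddCommGroup L] [Module ℂ L] [Module ℂ[X] L] [IsScalarTower ℂ ℂ[X] L]
  (m : ConformalProduct L)

lemma lincomb_oppSubst_eq_zero {a b : L} {N : ℕ} (hN : ∀ k, N ≤ k → m.coeff k a b = 0)
    {n : ℕ} (hn : N ≤ n) : m.lincomb (fun k => (oppSubst ^ k).coeff n) a b = 0 := by
  rw [m.lincomb_eq_sum _ hN]
  refine Finset.sum_eq_zero fun k hk => ?_
  rw [coeff_eq_zero_of_natDegree_lt ((natDegree_oppSubst_pow_le k).trans_lt
    ((Finset.mem_range.mp hk).trans_le hn)), zero_smul]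

/-- The opposite product `b ∘_{-∂-λ} a`, expanded in powers of `λ`. -/
def opp : ConformalProduct L :=
  ofHasFiniteSupport (fun n => (m.lincomb fun k => (oppSubst ^ k).coeff n).flip) fun a b => by
    obtain ⟨N, hN⟩ := m.coeff_finite b a
    exact (Set.finite_Iio N).subset fun n hn => by_contra fun h =>
      hn (m.lincomb_oppSubst_eq_zero hN (not_lt.mp h))

lemma opmul_opp (q : ℂ[X]) (a b : L) : m.opp.opmul q a b = m.opmul (-(X + q)) b a := by
  obtain ⟨N, hN⟩ := m.coeff_finite b a
  have hN' : ∀ n, N ≤ n → m.opp.coeff n a b = 0 := fun _ => m.lincomb_oppSubst_eq_zero hN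
  have hcoeff (n : ℕ) :
      m.opp.coeff n a b = ∑ k ∈ Finset.range N, (oppSubst ^ k).coeff n • m.coeff k b a :=
    m.lincomb_eq_sum _ hN
  simp only [opmul, lincomb_eq_sum _ _ hN, lincomb_eq_sum _ _ hN', hcoeff, Finset.smul_sum,
    smul_smul]
  rw [Finset.sum_comm]
  refine Finset.sum_congr rfl fun k hk => ?_
  rw [← Finset.sum_smul, ← eval_oppSubst, ← eval_pow,
    eval_eq_sum_range' ((natDegree_oppSubst_pow_le k).trans_lt (Finset.mem_range.mp hk))]
  simp_rw [mul_comm]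

end Opposite

section Commutator

variable {L : Type*} [AddCommGroup L] [Module ℂ L] [Module ℂ[X] L] [IsScalarTower ℂ ℂ[X] L]

variable (S : SuperModule L) (p : ConformalProduct L) in
/-- The bracket `[a_λ b] = a ∗_λ b - (-1)^{|a||b|} b ∗_{-∂-λ} a` on homogeneous elements,
extended linearly through the projections onto the two grades. -/
def commutator : ConformalProduct L :=
  ofHasFiniteSupport
    (fun n => p.coeff n - ∑ i : ZMod 2, ∑ j : ZMod 2,
      sgn i j • (p.opp.coeff n).compl₁₂ (S.proj i) (S.proj j))
    fun a b => by
      simp only [LinearMap.sub_apply, LinearMap.sum_apply, LinearMap.smul_apply,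
        LinearMap.compl₁₂_apply]
      refine (p.hasFiniteSupport_coeff a b).sub (.sum (fun i => .sum (fun j => ?_) _) _)
      exact (p.opp.hasFiniteSupport_coeff _ _).smul_right fun _ => sgn i j

variable {S : SuperModule L} {p : ConformalProduct L}

lemma commutator_coeff {i j : ZMod 2} {a b : L} (ha : a ∈ S.grade i) (hb : b ∈ S.grade j)
    (n : ℕ) : (commutator S p).coeff n a b = p.coeff n a b - sgn i j • p.opp.coeff n a b := by
  simp only [commutator, ofHasFiniteSupport, LinearMap.sub_apply, LinearMap.sum_apply,
    LinearMap.smul_apply, LinearMap.compl₁₂_apply]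
  rw [Fintype.sum_eq_single i fun i' hi' => by simp [S.proj_of_mem_of_ne ha (Ne.symm hi')],
    Fintype.sum_eq_single j fun j' hj' => by simp [S.proj_of_mem_of_ne hb (Ne.symm hj')],
    S.proj_of_mem ha, S.proj_of_mem hb]

lemma commutator_opmul {i j : ZMod 2} {a b : L} (ha : a ∈ S.grade i) (hb : b ∈ S.grade j)
    (q : ℂ[X]) :
    (commutator S p).opmul q a b = p.opmul q a b - sgn i j • p.opmul (-(X + q)) b a := by
  have hf : Function.HasFiniteSupport fun n => q ^ n • p.coeff n a b :=
    (p.hasFiniteSupport_coeff a b).smul_right (q ^ ·)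
  have hg : Function.HasFiniteSupport fun n => q ^ n • p.opp.coeff n a b :=
    (p.opp.hasFiniteSupport_coeff a b).smul_right (q ^ ·)
  have hg' : Function.HasFiniteSupport fun n => sgn i j • q ^ n • p.opp.coeff n a b :=
    hg.smul_right fun _ => sgn i j
  rw [← opmul_opp]
  simp only [opmul, lincomb_apply, commutator_coeff ha hb, smul_sub, smul_comm _ (sgn i j)]
  rw [finsum_sub_distrib hf hg', smul_finsum' _ hg]

lemma commutator_mul {i j : ZMod 2} {a b : L} (ha : a ∈ S.grade i) (hb : b ∈ S.grade j)
    (lam : ℂ) : (commutator S p).mul lam a b = p.mul lam a b - sgn i j • p.cmul lam b a := by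
  rw [mul_eq_opmul, mul_eq_opmul, cmul_eq_opmul, commutator_opmul ha hb]

lemma isLambdaProduct_commutator (hp : IsLambdaProduct S p) :
    IsLambdaProduct S (commutator S p) where
  even i j a b ha hb n := by
    rw [commutator_coeff ha hb]
    refine sub_mem (hp.even i j a b ha hb n) (Submodule.smul_mem _ _ ?_)
    rw [add_comm]
    exact lincomb_mem hp _ hb ha
  sesq_left lam a b := by
    simp only [mul_eq_opmul]
    refine S.induction_on₂ (P := fun a b =>
      (commutator S p).opmul (C lam) ((X : ℂ[X]) • a) b =
        (-lam) • (commutator S p).opmul (C lam) a b) a b (fun i j x hx y hy => ?_)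
      (fun x x' y hx hx' => by simp only [smul_add, map_add, LinearMap.add_apply, hx, hx'])
      (fun x y y' hy hy' => by simp only [smul_add, map_add, hy, hy'])
    rw [commutator_opmul (S.X_smul_mem i x hx) hy, commutator_opmul hx hy,
      opmul_X_smul_left hp, opmul_X_smul_right hp, ← map_neg, C_smul_eq_smul,
      show (X : ℂ[X]) + -(X + C lam) = -C lam by ring, ← map_neg, C_smul_eq_smul, smul_sub,
      smul_comm _ (sgn i j)]
  sesq_right lam a b := by
    simp only [mul_eq_opmul]
    refine S.induction_on₂ (P := fun a b =>
      (commutator S p).opmul (C lam) a ((X : ℂ[X]) • b) =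
        (X : ℂ[X]) • (commutator S p).opmul (C lam) a b +
          lam • (commutator S p).opmul (C lam) a b) a b (fun i j x hx y hy => ?_)
      (fun x x' y hx hx' => by simp only [smul_add, map_add, LinearMap.add_apply, hx, hx']; abel)
      (fun x y y' hy hy' => by simp only [smul_add, map_add, hy, hy']; abel)
    rw [commutator_opmul hx (S.X_smul_mem j y hy), commutator_opmul hx hy,
      opmul_X_smul_right hp, opmul_X_smul_left hp, neg_neg, add_smul, add_smul, C_smul_eq_smul,
      C_smul_eq_smul]
    module

lemma commutator_skew {i j : ZMod 2} {a b : L} (ha : a ∈ S.grade i) (hb : b ∈ S.grade j)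
    (lam : ℂ) : (commutator S p).mul lam a b = -(sgn i j • (commutator S p).cmul lam b a) := by
  rw [mul_eq_opmul, cmul_eq_opmul, commutator_opmul ha hb, commutator_opmul hb ha,
    neg_X_add_neg_X_add, smul_sub, smul_smul, sgn_comm j i, sgn_mul_self, one_smul, neg_sub]

end Commutator

section Nested

variable {L : Type*} [AddCommGroup L] [Module ℂ L] [Module ℂ[X] L] [IsScalarTower ℂ ℂ[X] L]
  {S : SuperModule L}

/-- `(x ∘₁_λ y) ∘₂_μ z` as a polynomial in `(λ, μ)`, evaluated at `(q 0, q 1)`. For operator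
values this is not the nested operator product; see `opmul_opmul_left`. -/
def nestedLeft (m₁ m₂ : ConformalProduct L) (x y z : L) (q : Fin 2 → ℂ[X]) : L :=
  ∑ᶠ n, q 0 ^ n • m₂.opmul (q 1) (m₁.coeff n x y) z

/-- `x ∘₁_λ (y ∘₂_μ z)` as a polynomial in `(λ, μ)`, evaluated at `(q 0, q 1)`. -/
def nestedRight (m₁ m₂ : ConformalProduct L) (x y z : L) (q : Fin 2 → ℂ[X]) : L :=
  ∑ᶠ n, q 1 ^ n • m₁.opmul (q 0) x (m₂.coeff n y z)

variable (m₁ m₂ : ConformalProduct L) (x y z : L)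

lemma nestedLeft_eq_sum {N : ℕ} (hN : ∀ n, N ≤ n → m₁.coeff n x y = 0) (q : Fin 2 → ℂ[X]) :
    nestedLeft m₁ m₂ x y z q =
      ∑ n ∈ Finset.range N, q 0 ^ n • m₂.opmul (q 1) (m₁.coeff n x y) z :=
  finsum_eq_sum_of_support_subset _ fun n hn => Finset.mem_range.mpr <|
    by_contra fun h => hn (by simp [hN n (not_lt.mp h)])

lemma nestedRight_eq_sum {N : ℕ} (hN : ∀ n, N ≤ n → m₂.coeff n y z = 0) (q : Fin 2 → ℂ[X]) :
    nestedRight m₁ m₂ x y z q =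
      ∑ n ∈ Finset.range N, q 1 ^ n • m₁.opmul (q 0) x (m₂.coeff n y z) :=
  finsum_eq_sum_of_support_subset _ fun n hn => Finset.mem_range.mpr <|
    by_contra fun h => hn (by simp [hN n (not_lt.mp h)])

lemma isPolynomialFun_nestedLeft : IsPolynomialFun (nestedLeft m₁ m₂ x y z) := by
  obtain ⟨N, hN⟩ := m₁.coeff_finite x y
  simp_rw [funext (nestedLeft_eq_sum m₁ m₂ x y z hN)]
  refine IsPolynomialFun.sum _ fun n _ => ?_
  simpa using (m₂.isPolynomialFun_opmul 1 (m₁.coeff n x y) z).aeval_smul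
    (MvPolynomial.X 0 ^ n : MvPolynomial (Fin 2) ℂ)

lemma isPolynomialFun_nestedRight : IsPolynomialFun (nestedRight m₁ m₂ x y z) := by
  obtain ⟨N, hN⟩ := m₂.coeff_finite y z
  simp_rw [funext (nestedRight_eq_sum m₁ m₂ x y z hN)]
  refine IsPolynomialFun.sum _ fun n _ => ?_
  simpa using (m₁.isPolynomialFun_opmul 0 x (m₂.coeff n y z)).aeval_smul
    (MvPolynomial.X 1 ^ n : MvPolynomial (Fin 2) ℂ)

variable {m₁ m₂}

lemma opmul_opmul_left (hm₂ : IsLambdaProduct S m₂) (q r : ℂ[X]) :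
    m₂.opmul r (m₁.opmul q x y) z = nestedLeft m₁ m₂ x y z ![q.comp (-r), r] := by
  obtain ⟨N, hN⟩ := m₁.coeff_finite x y
  rw [m₁.opmul_eq_sum q hN, map_sum, LinearMap.sum_apply, nestedLeft_eq_sum m₁ m₂ x y z hN]
  simp [opmul_smul_left hm₂, pow_comp]

lemma opmul_opmul_right (hm₁ : IsLambdaProduct S m₁) (q r : ℂ[X]) :
    m₁.opmul q x (m₂.opmul r y z) = nestedRight m₁ m₂ x y z ![q, r.comp (X + q)] := by
  obtain ⟨N, hN⟩ := m₂.coeff_finite y z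
  rw [m₂.opmul_eq_sum r hN, map_sum, nestedRight_eq_sum m₁ m₂ x y z hN]
  simp [opmul_smul_right hm₁, pow_comp]

variable {m₃ m₄ : ConformalProduct L} {x y z}

lemma nestedLeft_C (h₂ : IsLambdaProduct S m₂) (lam mu : ℂ) :
    nestedLeft m₁ m₂ x y z ![C lam, C mu] = m₂.mul mu (m₁.mul lam x y) z := by
  rw [mul_eq_opmul, mul_eq_opmul, opmul_opmul_left _ _ _ h₂, C_comp]

lemma nestedRight_C (h₃ : IsLambdaProduct S m₃) (lam mu : ℂ) :
    nestedRight m₃ m₄ x y z ![C lam, C mu] = m₃.mul lam x (m₄.mul mu y z) := by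
  rw [mul_eq_opmul, mul_eq_opmul, opmul_opmul_right _ _ _ h₃, C_comp]

/-- An identity of left-symmetric shape between nested `λ`-products that holds for all complex
`λ, μ` persists when `λ, μ` are replaced by arbitrary operators `u₀, u₁ ∈ ℂ[∂]`. -/
lemma nestedLeft_sub_nestedRight (h₂ : IsLambdaProduct S m₂) (h₃ : IsLambdaProduct S m₃)
    {c : ℂ} (h : ∀ lam mu : ℂ,
      m₂.mul (lam + mu) (m₁.mul lam x y) z - m₃.mul lam x (m₄.mul mu y z) =
        c • (m₂.mul (lam + mu) (m₁.mul mu y x) z - m₃.mul mu y (m₄.mul lam x z)))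
    {u₀ u₁ u₂ : ℂ[X]} (hu : u₀ + u₁ = u₂) :
    nestedLeft m₁ m₂ x y z ![u₀, u₂] - nestedRight m₃ m₄ x y z ![u₀, u₁] =
      c • (nestedLeft m₁ m₂ y x z ![u₁, u₂] - nestedRight m₃ m₄ y x z ![u₁, u₀]) := by
  subst hu
  have hΦ := ((isPolynomialFun_nestedLeft m₁ m₂ x y z).comp₂ (.X 0) (.X 0 + .X 1)).sub
    ((isPolynomialFun_nestedRight m₃ m₄ x y z).comp₂ (.X 0) (.X 1))
  have hΨ := (((isPolynomialFun_nestedLeft m₁ m₂ y x z).comp₂ (.X 1) (.X 0 + .X 1)).sub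
    ((isPolynomialFun_nestedRight m₃ m₄ y x z).comp₂ (.X 1) (.X 0))).smul c
  simp only [map_add, MvPolynomial.aeval_X] at hΦ hΨ
  have key := hΦ.ext hΨ fun v => by
    simpa only [← map_add, nestedLeft_C h₂, nestedRight_C h₃] using h (v 0) (v 1)
  simpa using congrFun key ![u₀, u₁]

end Nested

end ConformalProduct

open ConformalProduct

section PreLiePoisson

variable {L : Type*} [AddCommGroup L] [Module ℂ L] [Module ℂ[X] L] [IsScalarTower ℂ ℂ[X] L]
  {S : SuperModule L} {mc p : ConformalProduct L}

lemma IsCommAssoc.opmul_comm (h : IsCommAssoc S mc) {i j : ZMod 2} {x y : L}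
    (hx : x ∈ S.grade i) (hy : y ∈ S.grade j) (q : ℂ[X]) :
    mc.opmul q x y = sgn i j • mc.opmul (-(X + q)) y x := by
  rw [← opmul_opp]
  exact opmul_eq_smul_opmul_of_mul_eq _ (fun lam => by
    rw [h.comm i j x y hx hy, cmul_eq_opmul, mul_eq_opmul, opmul_opp]) q

/-- `compat₁` at operator values: by `hu` and `hv`, both sides are the substitution
`λ := u`, `μ := r.comp (∂ + u)` into `compat₁`. -/
lemma IsPreLiePoisson.compat₁_opmul (h : IsPreLiePoisson S mc p) (x y z : L) {q v u r : ℂ[X]}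
    (hu : q.comp (-v) = u) (hv : u + r.comp (X + u) = v) :
    p.opmul v (mc.opmul q x y) z = mc.opmul u x (p.opmul r y z) := by
  rw [opmul_opmul_left _ _ _ h.leftSymmetric.toIsLambdaProduct,
    opmul_opmul_right _ _ _ h.commAssoc.toIsLambdaProduct, hu, ← sub_eq_zero]
  simpa using nestedLeft_sub_nestedRight h.leftSymmetric.toIsLambdaProduct
    h.commAssoc.toIsLambdaProduct (c := 0) (fun lam mu => by rw [h.compat₁, sub_self, zero_smul])
    hv

lemma IsPreLiePoisson.compat₂_opmul_neg (h : IsPreLiePoisson S mc p) {i k : ZMod 2} {x z : L}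
    (hx : x ∈ S.grade i) (hz : z ∈ S.grade k) (y : L) (lam mu : ℂ) :
    p.opmul (-(X + C (lam + mu))) z (mc.opmul (C lam) x y) =
      mc.opmul (-(X + C mu)) (p.opmul (-(X + C lam)) z x) y -
        sgn i k • (mc.opmul (-(X + C mu)) (p.opmul (C lam) x z) y -
          p.opmul (C lam) x (mc.opmul (-(X + C mu)) z y)) := by
  have hp := h.leftSymmetric.toIsLambdaProduct
  have hmc := h.commAssoc.toIsLambdaProduct
  have key := nestedLeft_sub_nestedRight hmc hp (h.compat₂ k i z x hz hx y)
    (u₀ := -(X + C (lam + mu))) (u₁ := C lam) (u₂ := -(X + C mu)) (by rw [map_add]; ring)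
  simp only [opmul_opmul_left _ _ _ hmc, opmul_opmul_right _ _ _ hp, C_comp, neg_comp, add_comp,
    X_comp, map_add, sgn_comm k i] at key ⊢
  ring_nf at key ⊢
  linear_combination (norm := module) -key

lemma IsPreLiePoisson.compat₂' (h : IsPreLiePoisson S mc p) {i j : ZMod 2} {x y : L}
    (hx : x ∈ S.grade i) (hy : y ∈ S.grade j) (z : L) (lam mu : ℂ) :
    p.opmul (C mu) y (mc.opmul (C lam) x z) =
      mc.opmul (C (lam + mu)) (p.opmul (C mu) y x) z -
        sgn i j • (mc.opmul (C (lam + mu)) (p.opmul (C lam) x y) z -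
          p.opmul (C lam) x (mc.opmul (C mu) y z)) := by
  have key := sgn_smul_eq_iff.mpr (h.compat₂ i j x y hx hy z lam mu)
  simp only [mul_eq_opmul] at key
  linear_combination (norm := module) key

lemma IsPreLiePoisson.opmul_right_comm (h : IsPreLiePoisson S mc p) {i j k : ZMod 2}
    {x y z : L} (hx : x ∈ S.grade i) (hy : y ∈ S.grade j) (hz : z ∈ S.grade k)
    (lam mu : ℂ) :
    mc.opmul (C (lam + mu)) (p.opmul (C lam) x y) z =
      sgn j k • p.opmul (-(X + C mu)) (mc.opmul (C lam) x z) y := by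
  rw [h.commAssoc.opmul_comm (opmul_mem h.leftSymmetric.toIsLambdaProduct _ hx hy) hz,
    ← h.compat₁_opmul z x y (q := -(X + C lam)) (v := -(X + C mu)) (u := -(X + C (lam + mu)))
      (r := C lam) (by simp; ring) (by simp; ring),
    h.commAssoc.opmul_comm hz hx, map_smul, LinearMap.smul_apply, smul_smul,
    neg_X_add_neg_X_add, sgn_add_left, sgn_comm k i, mul_right_comm, sgn_mul_self, one_mul]

lemma IsPreLiePoisson.opmul_left_comm (h : IsPreLiePoisson S mc p) {i j : ZMod 2} {x y : L}
    (hx : x ∈ S.grade i) (hy : y ∈ S.grade j) (z : L) (lam mu : ℂ) :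
    p.opmul (C (lam + mu)) (mc.opmul (C mu) y x) z =
      sgn i j • mc.opmul (C lam) x (p.opmul (C mu) y z) := by
  rw [h.commAssoc.opmul_comm hy hx, map_smul, LinearMap.smul_apply,
    h.compat₁_opmul x y z (u := C lam) (r := C mu) (by simp) (by simp), sgn_comm]

end PreLiePoisson

namespace ConformalProduct

variable {L : Type*} [AddCommGroup L] [Module ℂ L] [Module ℂ[X] L] [IsScalarTower ℂ ℂ[X] L]
  {S : SuperModule L} {mc p : ConformalProduct L}

lemma commutator_jacobi_of_mem (hp : IsLeftSymmetric S p) {i j k : ZMod 2} {a b c : L}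
    (ha : a ∈ S.grade i) (hb : b ∈ S.grade j) (hc : c ∈ S.grade k) (lam mu : ℂ) :
    (commutator S p).mul lam a ((commutator S p).mul mu b c) =
      (commutator S p).mul (lam + mu) ((commutator S p).mul lam a b) c +
        sgn i j • (commutator S p).mul mu b ((commutator S p).mul lam a c) := by
  have hp' := hp.toIsLambdaProduct
  have hbr := isLambdaProduct_commutator hp'
  simp only [mul_eq_opmul]
  rw [commutator_opmul ha (opmul_mem hbr _ hb hc), commutator_opmul (opmul_mem hbr _ ha hb) hc,
    commutator_opmul hb (opmul_mem hbr _ ha hc), commutator_opmul hb hc, commutator_opmul ha hb,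
    commutator_opmul ha hc]
  simp only [map_sub, map_smul, LinearMap.sub_apply, LinearMap.smul_apply,
    opmul_opmul_left _ _ _ hp', opmul_opmul_right _ _ _ hp', C_comp, neg_comp, add_comp, X_comp]
  -- the twelve nested terms are exactly those of three instances of left symmetry
  have I₁ := nestedLeft_sub_nestedRight hp' hp' (hp.leftSym i j a b ha hb c)
    (u₀ := C lam) (u₁ := C mu) (map_add C lam mu).symm
  have I₂ := nestedLeft_sub_nestedRight hp' hp' (hp.leftSym i k a c ha hc b)
    (u₀ := C lam) (u₁ := -(X + C (lam + mu))) (u₂ := -(X + C mu)) (by rw [map_add]; ring)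
  have I₃ := nestedLeft_sub_nestedRight hp' hp' (hp.leftSym j k b c hb hc a)
    (u₀ := C mu) (u₁ := -(X + C (lam + mu))) (u₂ := -(X + C lam)) (by rw [map_add]; ring)
  simp only [map_add, sgn_add_left, sgn_add_right, sgn_comm j i, smul_sub, smul_smul]
    at I₁ I₂ I₃ ⊢
  -- brings equal operator arguments such as `-(X + C lam + C mu)` and `-(X + C (lam + mu))`
  -- to the same normal form
  ring_nf at I₁ I₂ I₃ ⊢
  rw [sgn_sq, one_mul, one_mul]
  linear_combination (norm := module) -I₁ + sgn j k • I₂ - (sgn i j * sgn i k) • I₃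

lemma commutator_transposedLeibniz_of_mem (h : IsPreLiePoisson S mc p) {i j k : ZMod 2}
    {a b c : L} (ha : a ∈ S.grade i) (hb : b ∈ S.grade j) (hc : c ∈ S.grade k)
    (lam mu : ℂ) :
    (2 : ℂ) • mc.mul lam a ((commutator S p).mul mu b c) =
      (commutator S p).mul (lam + mu) (mc.mul lam a b) c +
        sgn i j • (commutator S p).mul mu b (mc.mul lam a c) := by
  have hp := h.leftSymmetric.toIsLambdaProduct
  have hmc := h.commAssoc.toIsLambdaProduct
  simp only [mul_eq_opmul]
  rw [commutator_opmul hb hc, commutator_opmul (opmul_mem hmc _ ha hb) hc,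
    commutator_opmul hb (opmul_mem hmc _ ha hc)]
  simp only [map_sub, map_smul]
  have hF₂ : p.opmul (-(X + C mu)) (mc.opmul (C lam) a c) b =
      mc.opmul (C lam) a (p.opmul (-(X + C mu)) c b) :=
    h.compat₁_opmul a c b (u := C lam) (r := -(X + C mu)) (by simp) (by simp; ring)
  -- everything is reduced to `a ∘_λ (b ∗_μ c)`, `a ∘_λ (c ∗_{-∂-μ} b)`,
  -- `(b ∘_μ c) ∗_{-∂-λ} a` and `a ∗_λ (b ∘_μ c)`
  rw [h.compat₁_opmul a b c (u := C lam) (r := C mu) (by simp) (by simp),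
    h.compat₂_opmul_neg ha hc b lam mu, h.compat₂' ha hb c lam mu,
    h.opmul_right_comm ha hb hc, hF₂, add_comm lam mu, h.opmul_right_comm hb ha hc,
    h.commAssoc.opmul_comm (opmul_mem hp (-(X + C lam)) hc ha) hb, neg_X_add_neg_X_add,
    ← h.compat₁_opmul b c a (q := C mu) (v := -(X + C lam)) (u := C mu) (r := -(X + C lam))
      (by simp) (by simp; ring),
    h.commAssoc.opmul_comm (opmul_mem hp (C lam) ha hc) hb, neg_X_add_neg_X_add,
    ← h.compat₁_opmul b a c (q := C mu) (v := C (lam + mu)) (u := C mu) (r := C lam)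
      (by simp) (by simp; ring), h.opmul_left_comm ha hb c,
    h.commAssoc.opmul_comm hc hb, neg_X_add_neg_X_add]
  simp only [map_smul, sgn_add_left, sgn_add_right, sgn_comm j i, sgn_comm k j, smul_sub,
    smul_smul]
  ring_nf
  simp only [sgn_sq, one_mul, mul_one]
  module

lemma commutator_jacobi (hp : IsLeftSymmetric S p) (i j : ZMod 2) (a b : L)
    (ha : a ∈ S.grade i) (hb : b ∈ S.grade j) (c : L) (lam mu : ℂ) :
    (commutator S p).mul lam a ((commutator S p).mul mu b c) =
      (commutator S p).mul (lam + mu) ((commutator S p).mul lam a b) c +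
        sgn i j • (commutator S p).mul mu b ((commutator S p).mul lam a c) := by
  simp only [mul_eq_opmul] at *
  induction c using S.induction_on with
  | hom k c hc => simpa only [mul_eq_opmul] using commutator_jacobi_of_mem hp ha hb hc lam mu
  | add c c' hc hc' =>
    simp only [map_add, hc, hc', smul_add]
    abel

lemma commutator_transposedLeibniz (h : IsPreLiePoisson S mc p) (i j : ZMod 2) (a b : L)
    (ha : a ∈ S.grade i) (hb : b ∈ S.grade j) (c : L) (lam mu : ℂ) :
    (2 : ℂ) • mc.mul lam a ((commutator S p).mul mu b c) =
      (commutator S p).mul (lam + mu) (mc.mul lam a b) c +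
        sgn i j • (commutator S p).mul mu b (mc.mul lam a c) := by
  simp only [mul_eq_opmul] at *
  induction c using S.induction_on with
  | hom k c hc =>
    simpa only [mul_eq_opmul] using commutator_transposedLeibniz_of_mem h ha hb hc lam mu
  | add c c' hc hc' =>
    simp only [map_add, hc, hc', smul_add]
    abel

end ConformalProduct

/-- the commutator bracket
`[a_λ b] = a ∗_λ b - (-1)^{|a||b|} (b ∗_{-∂-λ} a)` of a pre-Lie Poisson conformal
superalgebra makes it a transposed Poisson conformal superalgebra. -/
theorem statement_15 (S : SuperModule L) (mc p : ConformalProduct L)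
    (hPLP : IsPreLiePoisson S mc p) :
    ∃ br : ConformalProduct L,
      (∀ (i j : ZMod 2) (a b : L), a ∈ S.grade i → b ∈ S.grade j →
        ∀ lam : ℂ, br.mul lam a b = p.mul lam a b - sgn i j • p.cmul lam b a) ∧
      IsTPCSA S mc br :=
  ⟨commutator S p, fun _ _ _ _ ha hb => commutator_mul ha hb,
    { commAssoc := hPLP.commAssoc
      lie :=
        { isLambdaProduct_commutator hPLP.leftSymmetric.toIsLambdaProduct with
          skew := fun _ _ _ _ ha hb => commutator_skew ha hb
          jacobi := commutator_jacobi hPLP.leftSymmetric }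
      transposedLeibniz := commutator_transposedLeibniz hPLP }⟩

end TPCSAFormal
end
end
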